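/- For all real numbers w₁, w₂, w₃ with w₁ + w₂ + w₃ = 1, one has E[w₁ μ̂² + w₂ μ̂'² + w₃ μ̂ μ̂'] = μ² + ((w₁ + w₂) σ² + w₃ σ_Y²)/N. -/

import Mathlib

/-!
For i.i.d. samples, `E[μ̂_φ μ̂_ψ] = E[φ] E[ψ] + Cov(φ, ψ) / N`, and `X'` has the law of `X`
(integrate its conditional law), so everything reduces to `Cov(f X, f X') = Var(E[f X | 𝓖])`,
i.e. `E[f X f X'] = E[E[f X | 𝓖]²]`. For bounded `f` this is the tower property combined with
conditional independence and equal conditional laws. In general, truncate `f`: the truncations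
converge in `L²`, and both sides are continuous in `L²` because `E[· | 𝓖]` is the orthogonal
projection onto `L²(𝓖)`.
-/

open MeasureTheory ProbabilityTheory Filter Topology
open scoped ENNReal RealInnerProductSpace

namespace MeasureTheory

variable {α : Type*} {m mα : MeasurableSpace α} {μ : Measure α}

theorem MemLp.inner_toLp_eq_integral_mul {u v : α → ℝ} (hu : MemLp u 2 μ)
    (hv : MemLp v 2 μ) :
    ⟪hu.toLp u, hv.toLp v⟫ = ∫ x, u x * v x ∂μ := by
  rw [L2.inner_def]
  refine integral_congr_ae ?_
  filter_upwards [hu.coeFn_toLp, hv.coeFn_toLp] with x hux hvx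
  simp [hux, hvx, mul_comm]

theorem tendsto_integral_mul_of_tendsto_toLp {ι : Type*} {l : Filter ι} {u v : ι → α → ℝ}
    {u₀ v₀ : α → ℝ} (hu : ∀ i, MemLp (u i) 2 μ) (hv : ∀ i, MemLp (v i) 2 μ)
    (hu₀ : MemLp u₀ 2 μ) (hv₀ : MemLp v₀ 2 μ)
    (hlimu : Tendsto (fun i => (hu i).toLp (u i)) l (𝓝 (hu₀.toLp u₀)))
    (hlimv : Tendsto (fun i => (hv i).toLp (v i)) l (𝓝 (hv₀.toLp v₀))) :
    Tendsto (fun i => ∫ x, u i x * v i x ∂μ) l (𝓝 (∫ x, u₀ x * v₀ x ∂μ)) := by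
  rw [← hu₀.inner_toLp_eq_integral_mul hv₀]
  exact (hlimu.inner (𝕜 := ℝ) hlimv).congr fun i => (hu i).inner_toLp_eq_integral_mul (hv i)

theorem integral_weighted_squares {A B : α → ℝ} (hA : MemLp A 2 μ) (hB : MemLp B 2 μ)
    (w₁ w₂ w₃ : ℝ) :
    ∫ x, (w₁ * A x ^ 2 + w₂ * B x ^ 2 + w₃ * (A x * B x)) ∂μ
      = w₁ * ∫ x, A x * A x ∂μ + w₂ * ∫ x, B x * B x ∂μ + w₃ * ∫ x, A x * B x ∂μ := by
  have hint {u v : α → ℝ} (hu : MemLp u 2 μ) (hv : MemLp v 2 μ) (w : ℝ) :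
      Integrable (fun x => w * (u x * v x)) μ :=
    (hu.integrable_mul hv).const_mul w
  have hint₁₂ : Integrable (fun x => w₁ * (A x * A x) + w₂ * (B x * B x)) μ :=
    (hint hA hA w₁).add (hint hB hB w₂)
  simp only [sq]
  rw [integral_add hint₁₂ (hint hA hB w₃), integral_add (hint hA hA w₁) (hint hB hB w₂),
    integral_const_mul, integral_const_mul, integral_const_mul]

variable [IsFiniteMeasure μ]

theorem MemLp.integral_condExp_sq_eq_inner (hm : m ≤ mα) {u : α → ℝ} (hu : MemLp u 2 μ) :
    ∫ x, (μ[u|m] x) ^ 2 ∂μ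
      = ⟪(condExpL2 ℝ ℝ hm (hu.toLp u) : Lp ℝ 2 μ), condExpL2 ℝ ℝ hm (hu.toLp u)⟫ := by
  rw [L2.inner_def]
  refine integral_congr_ae ?_
  filter_upwards [hu.condExpL2_ae_eq_condExp (𝕜 := ℝ) hm] with x hx
  simp [hx, sq]

theorem tendsto_integral_condExp_sq_of_tendsto_toLp (hm : m ≤ mα) {ι : Type*} {l : Filter ι}
    {u : ι → α → ℝ} {u₀ : α → ℝ} (hu : ∀ i, MemLp (u i) 2 μ) (hu₀ : MemLp u₀ 2 μ)
    (hlim : Tendsto (fun i => (hu i).toLp (u i)) l (𝓝 (hu₀.toLp u₀))) :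
    Tendsto (fun i => ∫ x, (μ[u i|m] x) ^ 2 ∂μ) l (𝓝 (∫ x, (μ[u₀|m] x) ^ 2 ∂μ)) := by
  have hcont : Continuous fun w : Lp ℝ 2 μ => (condExpL2 ℝ ℝ hm w : Lp ℝ 2 μ) :=
    continuous_subtype_val.comp (condExpL2 ℝ ℝ hm).continuous
  have hproj := (hcont.tendsto _).comp hlim
  rw [hu₀.integral_condExp_sq_eq_inner hm]
  exact (hproj.inner (𝕜 := ℝ) hproj).congr fun i =>
    ((hu i).integral_condExp_sq_eq_inner hm).symm

end MeasureTheory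

namespace ProbabilityTheory

section Truncation

variable {α : Type*} {m mα : MeasurableSpace α} {μ : Measure α} [IsFiniteMeasure μ]

theorem tendsto_truncation_atTop (U : α → ℝ) (x : α) :
    Tendsto (fun k : ℕ => truncation U k x) atTop (𝓝 (U x)) := by
  refine tendsto_const_nhds.congr' ?_
  filter_upwards [eventually_gt_atTop ⌈|U x|⌉₊] with k hk
  exact (truncation_eq_self ((Nat.le_ceil _).trans_lt (by exact_mod_cast hk))).symm

theorem tendsto_toLp_truncation {p : ℝ≥0∞} [Fact (1 ≤ p)] (hp : p ≠ ∞) {U : α → ℝ}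
    (hU : MemLp U p μ) :
    Tendsto (fun k : ℕ => (hU.1.memLp_truncation (A := k)).toLp (truncation U k)) atTop
      (𝓝 (hU.toLp U)) := by
  rw [Lp.tendsto_Lp_iff_tendsto_eLpNorm'']
  have hdom : UnifIntegrable (fun k : ℕ => truncation U k) p μ := fun ε hε => by
    obtain ⟨δ, hδ, hUδ⟩ := unifIntegrable_const (ι := Unit) Fact.out hp hU hε
    refine ⟨δ, hδ, fun k s hs hμs => (eLpNorm_mono fun x => ?_).trans (hUδ () s hs hμs)⟩
    by_cases hx : x ∈ s
    · simpa [hx] using abs_truncation_le_abs_self U k x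
    · simp [hx]
  exact tendsto_Lp_finite_of_tendsto_ae Fact.out hp (fun k => hU.1.truncation) hU hdom
    (ae_of_all _ (tendsto_truncation_atTop U))

theorem integral_mul_eq_integral_condExp_sq (hm : m ≤ mα) {U V : α → ℝ} (hU : MemLp U 2 μ)
    (hV : MemLp V 2 μ)
    (hcondIndep : ∀ φ : ℝ → ℝ, Measurable φ → (∃ C, ∀ x, |φ x| ≤ C) →
      μ[fun x => φ (U x) * φ (V x)|m]
        =ᵐ[μ] fun x => μ[fun y => φ (U y)|m] x * μ[fun y => φ (V y)|m] x)
    (hcondLaw : ∀ φ : ℝ → ℝ, Measurable φ → (∃ C, ∀ x, |φ x| ≤ C) →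
      μ[fun x => φ (U x)|m] =ᵐ[μ] μ[fun x => φ (V x)|m]) :
    ∫ x, U x * V x ∂μ = ∫ x, (μ[U|m] x) ^ 2 ∂μ := by
  have htrunc (k : ℕ) : ∫ x, truncation U k x * truncation V k x ∂μ
      = ∫ x, (μ[truncation U k|m] x) ^ 2 ∂μ := by
    let φ : ℝ → ℝ := (Set.Ioc (-(k : ℝ)) k).indicator id
    have hφ : Measurable φ := measurable_id.indicator measurableSet_Ioc
    have hφC : ∃ C, ∀ x, |φ x| ≤ C := ⟨|k|, abs_truncation_le_bound id k⟩
    calc ∫ x, truncation U k x * truncation V k x ∂μ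
        = ∫ x, μ[fun x => φ (U x) * φ (V x)|m] x ∂μ := (integral_condExp hm).symm
      _ = ∫ x, μ[fun y => φ (U y)|m] x * μ[fun y => φ (V y)|m] x ∂μ :=
        integral_congr_ae (hcondIndep φ hφ hφC)
      _ = ∫ x, (μ[truncation U k|m] x) ^ 2 ∂μ := by
        refine integral_congr_ae ?_
        filter_upwards [hcondLaw φ hφ hφC] with x hx
        rw [← hx, sq]
        rfl
  have hUk (k : ℕ) := hU.1.memLp_truncation (μ := μ) (A := k) (p := 2)
  have hVk (k : ℕ) := hV.1.memLp_truncation (μ := μ) (A := k) (p := 2)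
  have hlimU := tendsto_toLp_truncation ENNReal.ofNat_ne_top hU
  have hlimV := tendsto_toLp_truncation ENNReal.ofNat_ne_top hV
  refine tendsto_nhds_unique
    (tendsto_integral_mul_of_tendsto_toLp hUk hVk hU hV hlimU hlimV) ?_
  simpa only [htrunc] using tendsto_integral_condExp_sq_of_tendsto_toLp hm hUk hU hlimU

end Truncation

theorem identDistrib_of_condExp_comp_ae_eq {Ω F : Type*} {m mΩ : MeasurableSpace Ω}
    [MeasurableSpace F] {P : Measure Ω} [IsFiniteMeasure P] (hm : m ≤ mΩ) {X X' : Ω → F}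
    (hX : Measurable X) (hX' : Measurable X')
    (h : ∀ g : F → ℝ, Measurable g → (∃ C, ∀ x, |g x| ≤ C) →
      P[fun ω => g (X ω)|m] =ᵐ[P] P[fun ω => g (X' ω)|m]) :
    IdentDistrib X X' P P := by
  refine ⟨hX.aemeasurable, hX'.aemeasurable, Measure.ext fun s hs => ?_⟩
  have hbdd : ∃ C, ∀ x, |s.indicator (1 : F → ℝ) x| ≤ C :=
    ⟨1, fun x => by by_cases hx : x ∈ s <;> simp [hx]⟩
  have hint := integral_congr_ae (h _ (measurable_one.indicator hs) hbdd)
  rw [integral_condExp hm, integral_condExp hm] at hint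
  simp only [← Set.indicator_comp_right, Pi.one_comp] at hint
  rw [integral_indicator_one (hX hs), integral_indicator_one (hX' hs)] at hint
  rw [Measure.map_apply hX hs, Measure.map_apply hX' hs]
  exact (measureReal_eq_measureReal_iff).1 hint

section SampleMean

variable {Ω ι β : Type*} {mΩ : MeasurableSpace Ω} [MeasurableSpace β] [Fintype ι]
  {P : Measure Ω} {Z : ι → Ω → β} {Z₀ : Ω → β} {φ ψ : β → ℝ}

noncomputable def sampleMean (Z : ι → Ω → β) (φ : β → ℝ) (ω : Ω) : ℝ :=
  (Fintype.card ι : ℝ)⁻¹ * ∑ i, φ (Z i ω)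

theorem memLp_sum_comp_of_identDistrib {p : ℝ≥0∞} (hident : ∀ i, IdentDistrib (Z i) Z₀ P P)
    (hφ : Measurable φ) (hφp : MemLp (φ ∘ Z₀) p P) : MemLp (fun ω => ∑ i, φ (Z i ω)) p P :=
  memLp_finsetSum _ fun i _ => ((hident i).comp hφ).memLp_iff.2 hφp

theorem memLp_sampleMean {p : ℝ≥0∞} (hident : ∀ i, IdentDistrib (Z i) Z₀ P P)
    (hφ : Measurable φ) (hφp : MemLp (φ ∘ Z₀) p P) : MemLp (sampleMean Z φ) p P :=
  (memLp_sum_comp_of_identDistrib hident hφ hφp).const_mul _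

theorem integral_sum_comp_of_identDistrib (hident : ∀ i, IdentDistrib (Z i) Z₀ P P)
    (hφ : Measurable φ) (hφ1 : Integrable (φ ∘ Z₀) P) :
    ∫ ω, ∑ i, φ (Z i ω) ∂P = Fintype.card ι * ∫ ω, φ (Z₀ ω) ∂P := by
  have hint (i : ι) : ∫ ω, φ (Z i ω) ∂P = ∫ ω, φ (Z₀ ω) ∂P := ((hident i).comp hφ).integral_eq
  rw [integral_finsetSum (f := fun i ω => φ (Z i ω)) _
    fun i _ => ((hident i).comp hφ).integrable_iff.2 hφ1]
  simp [hint]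

theorem covariance_sum_comp_sum_comp_of_iIndepFun [IsFiniteMeasure P] (hind : iIndepFun Z P)
    (hident : ∀ i, IdentDistrib (Z i) Z₀ P P) (hφ : Measurable φ) (hψ : Measurable ψ)
    (hφ2 : MemLp (φ ∘ Z₀) 2 P) (hψ2 : MemLp (ψ ∘ Z₀) 2 P) :
    cov[fun ω => ∑ i, φ (Z i ω), fun ω => ∑ i, ψ (Z i ω); P]
      = Fintype.card ι * cov[φ ∘ Z₀, ψ ∘ Z₀; P] := by
  classical
  have hφi (i : ι) : MemLp (fun ω => φ (Z i ω)) 2 P := ((hident i).comp hφ).memLp_iff.2 hφ2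
  have hψi (i : ι) : MemLp (fun ω => ψ (Z i ω)) 2 P := ((hident i).comp hψ).memLp_iff.2 hψ2
  have hcov (i j : ι) : cov[fun ω => φ (Z i ω), fun ω => ψ (Z j ω); P]
      = if i = j then cov[φ ∘ Z₀, ψ ∘ Z₀; P] else 0 := by
    split_ifs with hij
    · subst hij
      rw [← covariance_map_fun hφ.aestronglyMeasurable hψ.aestronglyMeasurable
          (hident i).aemeasurable_fst, (hident i).map_eq,
        covariance_map hφ.aestronglyMeasurable hψ.aestronglyMeasurable
          (hident i).aemeasurable_snd]
    · exact ((hind.indepFun hij).comp hφ hψ).covariance_eq_zero (hφi i) (hψi j)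
  rw [covariance_fun_sum_fun_sum hφi hψi]
  simp [hcov]

theorem integral_sampleMean_mul_sampleMean [IsProbabilityMeasure P] [Nonempty ι]
    (hind : iIndepFun Z P) (hident : ∀ i, IdentDistrib (Z i) Z₀ P P)
    (hφ : Measurable φ) (hψ : Measurable ψ) (hφ2 : MemLp (φ ∘ Z₀) 2 P)
    (hψ2 : MemLp (ψ ∘ Z₀) 2 P) :
    ∫ ω, sampleMean Z φ ω * sampleMean Z ψ ω ∂P
      = (∫ ω, φ (Z₀ ω) ∂P) * (∫ ω, ψ (Z₀ ω) ∂P)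
        + cov[φ ∘ Z₀, ψ ∘ Z₀; P] / Fintype.card ι := by
  have hST := covariance_eq_sub (memLp_sum_comp_of_identDistrib hident hφ hφ2)
    (memLp_sum_comp_of_identDistrib hident hψ hψ2)
  rw [covariance_sum_comp_sum_comp_of_iIndepFun hind hident hφ hψ hφ2 hψ2,
    integral_sum_comp_of_identDistrib hident hφ (hφ2.integrable one_le_two),
    integral_sum_comp_of_identDistrib hident hψ (hψ2.integrable one_le_two)] at hST
  have hn : (Fintype.card ι : ℝ) ≠ 0 := Nat.cast_ne_zero.2 Fintype.card_ne_zero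
  simp only [Pi.mul_apply] at hST
  simp only [sampleMean, mul_mul_mul_comm, integral_const_mul]
  rw [eq_add_of_sub_eq' hST.symm]
  field_simp

end SampleMean

end ProbabilityTheory

theorem expectation_weighted_squares
    {Ω E F : Type*} (𝓖 : MeasurableSpace Ω)
    [MeasurableSpace Ω] [MeasurableSpace E] [MeasurableSpace F]
    (P : Measure Ω) [IsProbabilityMeasure P]
    (Y : Ω → E) (X X' : Ω → F) (f : F → ℝ)
    (hY : Measurable Y) (hX : Measurable X) (hX' : Measurable X') (hf : Measurable f)
    (hL2 : MemLp (fun ω => f (X ω)) 2 P) (hL2' : MemLp (fun ω => f (X' ω)) 2 P)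
    (h𝓖 : 𝓖 = MeasurableSpace.comap Y inferInstance)
    -- conditional independence of `X` and `X'` given `𝓖 = σ(Y)`
    (hCondIndep : ∀ g h : F → ℝ, Measurable g → Measurable h →
      (∃ C, ∀ x, |g x| ≤ C) → (∃ C, ∀ x, |h x| ≤ C) →
      P[(fun ω => g (X ω) * h (X' ω))|𝓖]
        =ᵐ[P] fun ω => ((P[(fun ω' => g (X ω'))|𝓖]) ω) * ((P[(fun ω' => h (X' ω'))|𝓖]) ω))
    -- `X` and `X'` have the same conditional distribution given `𝓖`
    (hSameCondDist : ∀ g : F → ℝ, Measurable g → (∃ C, ∀ x, |g x| ≤ C) →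
      P[(fun ω => g (X ω))|𝓖] =ᵐ[P] P[(fun ω => g (X' ω))|𝓖])
    (μ σ2 σY2 : ℝ) (hμ : μ = ∫ ω, f (X ω) ∂P)
    (hσ2 : σ2 = variance (fun ω => f (X ω)) P)
    (hσY2 : σY2 = variance (P[(fun ω => f (X ω))|𝓖]) P)
    (N : ℕ) (hN : 0 < N)
    -- i.i.d. sample triples `(Yₙ, Xₙ, X'ₙ)` with the same joint distribution as `(Y, X, X')`
    (Ys : Fin N → Ω → E) (Xs Xs' : Fin N → Ω → F)
    (hYs : ∀ n, Measurable (Ys n)) (hXs : ∀ n, Measurable (Xs n)) (hXs' : ∀ n, Measurable (Xs' n))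
    (hIndep : iIndepFun (fun n ω => (Ys n ω, Xs n ω, Xs' n ω)) P)
    (hIdent : ∀ n, Measure.map (fun ω => (Ys n ω, Xs n ω, Xs' n ω)) P
        = Measure.map (fun ω => (Y ω, X ω, X' ω)) P)
    (muHat muHat' : Ω → ℝ)
    (hmuHat : ∀ ω, muHat ω = (N : ℝ)⁻¹ * ∑ n, f (Xs n ω))
    (hmuHat' : ∀ ω, muHat' ω = (N : ℝ)⁻¹ * ∑ n, f (Xs' n ω))
    :
    ∀ w₁ w₂ w₃ : ℝ, w₁ + w₂ + w₃ = 1 →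
      ∫ ω, (w₁ * muHat ω ^ 2 + w₂ * muHat' ω ^ 2 + w₃ * (muHat ω * muHat' ω)) ∂P
        = μ ^ 2 + ((w₁ + w₂) * σ2 + w₃ * σY2) / (N : ℝ) := by
  intro w₁ w₂ w₃ hw
  have hm : 𝓖 ≤ ‹MeasurableSpace Ω› := h𝓖 ▸ hY.comap_le
  have : Nonempty (Fin N) := ⟨⟨0, hN⟩⟩
  set Z := fun n ω => (Ys n ω, Xs n ω, Xs' n ω)
  have hident (n : Fin N) : IdentDistrib (Z n) (fun ω => (Y ω, X ω, X' ω)) P P :=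
    ⟨((hYs n).prod ((hXs n).prod (hXs' n))).aemeasurable,
      (hY.prod (hX.prod hX')).aemeasurable, hIdent n⟩
  have hf₁ : Measurable fun z : E × F × F => f z.2.1 := by fun_prop
  have hf₂ : Measurable fun z : E × F × F => f z.2.2 := by fun_prop
  obtain rfl : muHat = sampleMean Z fun z => f z.2.1 :=
    funext fun ω => by simp [hmuHat, sampleMean, Z]
  obtain rfl : muHat' = sampleMean Z fun z => f z.2.2 :=
    funext fun ω => by simp [hmuHat', sampleMean, Z]
  have hfX' : IdentDistrib (fun ω => f (X' ω)) (fun ω => f (X ω)) P P :=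
    (identDistrib_of_condExp_comp_ae_eq hm hX hX' hSameCondDist).symm.comp hf
  have hcov : cov[fun ω => f (X ω), fun ω => f (X' ω); P] = σY2 := by
    have hproduct := integral_mul_eq_integral_condExp_sq hm hL2 hL2'
      (fun φ hφ ⟨C, hC⟩ => hCondIndep _ _ (hφ.comp hf) (hφ.comp hf) ⟨C, fun x => hC (f x)⟩
        ⟨C, fun x => hC (f x)⟩)
      (fun φ hφ ⟨C, hC⟩ => hSameCondDist _ (hφ.comp hf) ⟨C, fun x => hC (f x)⟩)
    rw [covariance_eq_sub hL2 hL2', hσY2, variance_eq_sub (hL2.condExp one_le_two),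
      integral_condExp hm]
    simp only [Pi.mul_apply, Pi.pow_apply, hproduct, hfX'.integral_eq, sq]
  have h₁₁ := integral_sampleMean_mul_sampleMean hIndep hident hf₁ hf₁ hL2 hL2
  have h₂₂ := integral_sampleMean_mul_sampleMean hIndep hident hf₂ hf₂ hL2' hL2'
  have h₁₂ := integral_sampleMean_mul_sampleMean hIndep hident hf₁ hf₂ hL2 hL2'
  simp only [Function.comp_def, Fintype.card_fin] at h₁₁ h₂₂ h₁₂
  rw [covariance_self hL2.aemeasurable, ← hσ2] at h₁₁
  rw [covariance_self hL2'.aemeasurable, hfX'.variance_eq, ← hσ2] at h₂₂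
  rw [hcov] at h₁₂
  rw [integral_weighted_squares (memLp_sampleMean hident hf₁ hL2)
    (memLp_sampleMean hident hf₂ hL2'), h₁₁, h₂₂, h₁₂, hfX'.integral_eq, ← hμ]
  linear_combination μ ^ 2 * hw
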